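/- Let |+⟩ = (|0⟩+|1⟩)/√2 and let V : ℂ² → (ℂ²)^⊗4 be the isometry defined by V|0⟩ = |0⟩⊗|+⟩⊗|0⟩⊗|0⟩ and V|1⟩ = (|1⟩⊗|0⟩⊗|1⟩⊗|0⟩ + |1⟩⊗|1⟩⊗|1⟩⊗|1⟩)/√2. Let A be the first two qubits. Then for every density matrix ρ on ℂ² with diagonal entries ρ₀₀ and ρ₁₁: (i) Tr_{3,4}(V ρ V†) = ρ₀₀ |0⟩⟨0|⊗|+⟩⟨+| + ρ₁₁ |1⟩⟨1|⊗(I₂/2); and (ii) S(Tr_{3,4}(V ρ V†)) = -ρ₀₀ log₂ ρ₀₀ - ρ₁₁ log₂ ρ₁₁ + ρ₁₁. (This is the Ryu–Takayanagi formula S_A = S_c + Tr(ρL) with area operator L = |1⟩⟨1|.) -/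

import Mathlib

open Matrix Kronecker
open scoped ComplexOrder

/-- Partial trace over the second (right) tensor factor. -/
noncomputable def ptraceRight {ιA ιB : Type*} [Fintype ιB]
    (ρ : Matrix (ιA × ιB) (ιA × ιB) ℂ) : Matrix ιA ιA ℂ :=
  Matrix.of fun x y => ∑ j : ιB, ρ (x, j) (y, j)

/-- The von Neumann entropy (base 2) of a (Hermitian) matrix, computed from its
eigenvalues (with the convention `0 · log₂ 0 = 0`). -/
noncomputable def vnEntropy {ι : Type*} [Fintype ι] [DecidableEq ι]
    (ρ : Matrix ι ι ℂ) : ℝ :=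
  letI : Decidable ρ.IsHermitian := Classical.propDecidable _
  if h : ρ.IsHermitian then -∑ i, h.eigenvalues i * Real.logb 2 (h.eigenvalues i) else 0

/-- The isometry `V|0⟩ = |0⟩⊗|+⟩⊗|0⟩⊗|0⟩`,
`V|1⟩ = (|1⟩⊗|0⟩⊗|1⟩⊗|0⟩ + |1⟩⊗|1⟩⊗|1⟩⊗|1⟩)/√2`, from one qubit into four qubits,
grouped as `((q₁,q₂),(q₃,q₄))` with `A` the first two qubits. -/
noncomputable def V14 : Matrix ((Fin 2 × Fin 2) × (Fin 2 × Fin 2)) (Fin 2) ℂ :=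
  Matrix.of fun q l =>
    if l = 0 then
      (if q.1.1 = 0 ∧ q.2.1 = 0 ∧ q.2.2 = 0 then (((Real.sqrt 2 : ℝ) : ℂ))⁻¹ else 0)
    else
      (if q.1.1 = 1 ∧ q.2.1 = 1 ∧ q.1.2 = q.2.2 then (((Real.sqrt 2 : ℝ) : ℂ))⁻¹ else 0)

/-! `V` sends `|0⟩` to `|0⟩|+⟩|00⟩` and `|1⟩` to `|1⟩` times a Bell pair shared between qubits
2 and 4 (and `|1⟩` on qubit 3). The two branches are orthogonal on qubits 3, 4, so tracing
these out kills the coherences and leaves the block-diagonal state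
`ρ₀₀ |0⟩⟨0| ⊗ |+⟩⟨+| + ρ₁₁ |1⟩⟨1| ⊗ I₂/2`. Conjugation by `I₂ ⊗ H` (`H` the Hadamard gate)
diagonalizes it with spectrum `ρ₀₀, 0, ρ₁₁/2, ρ₁₁/2`, and the entropy depends only on the
characteristic polynomial; the two halves of `ρ₁₁` contribute the area term `ρ₁₁`. -/
namespace Matrix

open Polynomial

variable {n : Type*} [Fintype n] [DecidableEq n]

theorem charpoly_unitary_conj {U : Matrix n n ℂ} (hU : U ∈ unitaryGroup n ℂ)
    (B : Matrix n n ℂ) : (U * B * star U).charpoly = B.charpoly := by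
  rw [charpoly_mul_comm, ← mul_assoc, mem_unitaryGroup_iff'.mp hU, one_mul]

theorem IsHermitian.sum_eigenvalues_eq_of_charpoly_eq {A : Matrix n n ℂ} (hA : A.IsHermitian)
    {d : n → ℝ} (h : A.charpoly = ∏ i, (X - C (d i : ℂ))) (f : ℝ → ℝ) :
    ∑ i, f (hA.eigenvalues i) = ∑ i, f (d i) := by
  have hroots := hA.roots_charpoly_eq_eigenvalues
  rw [h, roots_prod _ _ (by simp [Finset.prod_ne_zero_iff, X_sub_C_ne_zero])] at hroots
  have hmap : Multiset.map hA.eigenvalues Finset.univ.val = Multiset.map d Finset.univ.val := by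
    refine Multiset.map_injective Complex.ofReal_injective ?_
    simpa [Multiset.map_map] using hroots.symm
  have hsum (g : n → ℝ) : ∑ i, f (g i) = ((Finset.univ.val.map g).map f).sum := by
    rw [Multiset.map_map]; rfl
  rw [hsum, hsum, hmap]

end Matrix

theorem vnEntropy_unitary_conj_diagonal {n : Type*} [Fintype n] [DecidableEq n]
    {U : Matrix n n ℂ} (hU : U ∈ unitaryGroup n ℂ) (d : n → ℝ) :
    vnEntropy (U * diagonal (fun i => (d i : ℂ)) * star U) = -∑ i, d i * Real.logb 2 (d i) := by
  have hD : (diagonal fun i => (d i : ℂ)).IsHermitian :=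
    isHermitian_diagonal_of_self_adjoint _ (by ext i; simp)
  have hA : (U * diagonal (fun i => (d i : ℂ)) * star U).IsHermitian := by
    simpa only [star_eq_conjTranspose] using isHermitian_mul_mul_conjTranspose U hD
  have hcharpoly : (U * diagonal (fun i => (d i : ℂ)) * star U).charpoly =
      ∏ i, (Polynomial.X - Polynomial.C (d i : ℂ)) := by
    rw [charpoly_unitary_conj hU, charpoly_diagonal]
  rw [vnEntropy, dif_pos hA,
    hA.sum_eigenvalues_eq_of_charpoly_eq hcharpoly (fun x => x * Real.logb 2 x)]

theorem Complex.ofReal_sqrt_two_sq : ((Real.sqrt 2 : ℝ) : ℂ) ^ 2 = 2 := by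
  rw [← Complex.ofReal_pow, Real.sq_sqrt zero_le_two]
  norm_num

theorem Real.two_mul_half_mul_logb_half (b : ℝ) :
    2 * (b / 2 * Real.logb 2 (b / 2)) = b * Real.logb 2 b - b := by
  rcases eq_or_ne b 0 with rfl | hb
  · simp
  · rw [Real.logb_div hb two_ne_zero, Real.logb_self_eq_one one_lt_two]
    ring

noncomputable def hadamardGate : Matrix (Fin 2) (Fin 2) ℂ :=
  ((Real.sqrt 2 : ℝ) : ℂ)⁻¹ • !![1, 1; 1, -1]

theorem hadamardGate_mem_unitaryGroup : hadamardGate ∈ unitaryGroup (Fin 2) ℂ := by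
  rw [mem_unitaryGroup_iff]
  ext i j
  fin_cases i <;> fin_cases j <;>
    simp [hadamardGate, mul_apply, Fin.sum_univ_two, ← Complex.ofReal_inv,
      Complex.conj_ofReal] <;> ring_nf <;> simp [Complex.ofReal_sqrt_two_sq]

/-- The state `a |0⟩⟨0| ⊗ |+⟩⟨+| + b |1⟩⟨1| ⊗ I₂/2` on the first two qubits. -/
noncomputable def rtState (a b : ℂ) : Matrix (Fin 2 × Fin 2) (Fin 2 × Fin 2) ℂ :=
  a • ((!![1, 0; 0, 0] : Matrix (Fin 2) (Fin 2) ℂ) ⊗ₖ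
      (!![1/2, 1/2; 1/2, 1/2] : Matrix (Fin 2) (Fin 2) ℂ)) +
    b • ((!![0, 0; 0, 1] : Matrix (Fin 2) (Fin 2) ℂ) ⊗ₖ
      (!![1/2, 0; 0, 1/2] : Matrix (Fin 2) (Fin 2) ℂ))

theorem ptraceRight_V14_conj (ρ : Matrix (Fin 2) (Fin 2) ℂ) :
    ptraceRight (V14 * ρ * V14ᴴ) = rtState (ρ 0 0) (ρ 1 1) := by
  ext ⟨x1, x2⟩ ⟨y1, y2⟩
  fin_cases x1 <;> fin_cases x2 <;> fin_cases y1 <;> fin_cases y2 <;>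
    simp [rtState, ptraceRight, V14, mul_apply, Fintype.sum_prod_type, Fin.sum_univ_two,
      conjTranspose_apply] <;> ring_nf <;> simp [Complex.ofReal_sqrt_two_sq] <;> ring

theorem rtState_eq_conj_diagonal (a b : ℝ) :
    rtState a b = (1 ⊗ₖ hadamardGate) *
      diagonal (fun p => ((![![a, 0], ![b / 2, b / 2]] p.1 p.2 : ℝ) : ℂ)) *
        star (1 ⊗ₖ hadamardGate) := by
  ext ⟨x1, x2⟩ ⟨y1, y2⟩
  fin_cases x1 <;> fin_cases x2 <;> fin_cases y1 <;> fin_cases y2 <;>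
    simp [rtState, hadamardGate, mul_apply, Fintype.sum_prod_type, Fin.sum_univ_two,
      diagonal_apply, ← Complex.ofReal_inv, Complex.conj_ofReal] <;> ring_nf <;>
    simp [Complex.ofReal_sqrt_two_sq]

theorem vnEntropy_rtState (a b : ℝ) :
    vnEntropy (rtState a b) = -a * Real.logb 2 a - b * Real.logb 2 b + b := by
  rw [rtState_eq_conj_diagonal, vnEntropy_unitary_conj_diagonal
    (kronecker_mem_unitary (one_mem _) hadamardGate_mem_unitaryGroup)]
  simp only [Fintype.sum_prod_type, Fin.sum_univ_two, cons_val_zero, cons_val_one, zero_mul,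
    add_zero]
  linarith [Real.two_mul_half_mul_logb_half b]

theorem RT_formula_classical_plus_area_general (ρ : Matrix (Fin 2) (Fin 2) ℂ)
    (hρ : ρ.PosSemidef) :
    ptraceRight (V14 * ρ * V14ᴴ) =
      ρ 0 0 • ((!![1, 0; 0, 0] : Matrix (Fin 2) (Fin 2) ℂ) ⊗ₖ
          (!![1/2, 1/2; 1/2, 1/2] : Matrix (Fin 2) (Fin 2) ℂ)) +
        ρ 1 1 • ((!![0, 0; 0, 1] : Matrix (Fin 2) (Fin 2) ℂ) ⊗ₖ
          (!![1/2, 0; 0, 1/2] : Matrix (Fin 2) (Fin 2) ℂ)) ∧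
    vnEntropy (ptraceRight (V14 * ρ * V14ᴴ)) =
      -(ρ 0 0).re * Real.logb 2 (ρ 0 0).re - (ρ 1 1).re * Real.logb 2 (ρ 1 1).re
        + (ρ 1 1).re := by
  refine ⟨ptraceRight_V14_conj ρ, ?_⟩
  have hentropy := vnEntropy_rtState (ρ 0 0).re (ρ 1 1).re
  have hdiag (i : Fin 2) : ((ρ i i).re : ℂ) = ρ i i := hρ.1.coe_re_apply_self i
  rwa [hdiag, hdiag, ← ptraceRight_V14_conj] at hentropy

/-- a Ryu–Takayanagi formula `S_A = S_c + Tr(ρL)` with area operator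
`L = |1⟩⟨1|`: for every density matrix `ρ` on `ℂ²` with diagonal entries `ρ₀₀`, `ρ₁₁`:
(i) `Tr_{3,4}(VρV†) = ρ₀₀ |0⟩⟨0|⊗|+⟩⟨+| + ρ₁₁ |1⟩⟨1|⊗(I₂/2)`; and
(ii) `S(Tr_{3,4}(VρV†)) = -ρ₀₀ log₂ ρ₀₀ - ρ₁₁ log₂ ρ₁₁ + ρ₁₁`. -/
theorem RT_formula_classical_plus_area (ρ : Matrix (Fin 2) (Fin 2) ℂ)
    (hρ : ρ.PosSemidef) (hρtr : ρ.trace = 1) :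
    ptraceRight (V14 * ρ * V14ᴴ) =
      ρ 0 0 • ((!![1, 0; 0, 0] : Matrix (Fin 2) (Fin 2) ℂ) ⊗ₖ
          (!![1/2, 1/2; 1/2, 1/2] : Matrix (Fin 2) (Fin 2) ℂ)) +
        ρ 1 1 • ((!![0, 0; 0, 1] : Matrix (Fin 2) (Fin 2) ℂ) ⊗ₖ
          (!![1/2, 0; 0, 1/2] : Matrix (Fin 2) (Fin 2) ℂ)) ∧
    vnEntropy (ptraceRight (V14 * ρ * V14ᴴ)) =
      -(ρ 0 0).re * Real.logb 2 (ρ 0 0).re - (ρ 1 1).re * Real.logb 2 (ρ 1 1).re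
        + (ρ 1 1).re :=
  RT_formula_classical_plus_area_general ρ hρ
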